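/- arXiv:math/0403459 — 3 statements merged into one kernel-verified Lean document; each statement's English description precedes it below -/
import Mathlib

section
/- If the system x^α = Σ_{β ∈ I} a_{α,β} x^β (α ∈ J) has #I distinct solutions in K^n, then the multiplication matrices A_1, ..., A_n pairwise commute and each A_i is diagonalizable. -/
open Finset Matrix

/-- Total degree of a multi-index. -/
def mdeg {n : ℕ} (α : Fin n → ℕ) : ℕ := ∑ i, α i

/-- The set `I = {α ∈ ℤ₊ⁿ : |α| ≤ m}` of multi-indices of total degree at most `m`. -/
def Idx (n m : ℕ) : Finset (Fin n → ℕ) :=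
  (Fintype.piFinset fun _ => Finset.range (m + 1)).filter fun α => mdeg α ≤ m

/-- `I` is a lower set of multi-indices. -/
def IsLower {n : ℕ} (I : Finset (Fin n → ℕ)) : Prop :=
  ∀ β ∈ I, ∀ γ : Fin n → ℕ, (∀ i, γ i ≤ β i) → γ ∈ I

/-- `α` belongs to the border `J` of the lower set `I`. -/
def InBorder {n : ℕ} (I : Finset (Fin n → ℕ)) (α : Fin n → ℕ) : Prop :=
  α ∉ I ∧ ∃ β ∈ I, ∃ i : Fin n, α = β + Pi.single i 1

/-- The multiplication matrix `A_i`: its row indexed by `β ∈ I` is the standard basis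
vector at `β + e_i` if `β + e_i ∈ I`, and is `(a_{β+e_i,γ})_{γ∈I}` otherwise. -/
def multMat {K : Type*} [Field K] {n : ℕ} (I : Finset (Fin n → ℕ))
    (a : (Fin n → ℕ) → (Fin n → ℕ) → K) (i : Fin n) : Matrix ↥I ↥I K :=
  fun β γ =>
    if (β : Fin n → ℕ) + Pi.single i 1 ∈ I then
      (if (γ : Fin n → ℕ) = (β : Fin n → ℕ) + Pi.single i 1 then 1 else 0)
    else a ((β : Fin n → ℕ) + Pi.single i 1) γ

/-- The monomial vector `v(x) = (x^β)_{β ∈ I}`. -/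
def monVec {K : Type*} [Field K] {n : ℕ} (I : Finset (Fin n → ℕ)) (x : Fin n → K) :
    ↥I → K :=
  fun β => ∏ i, x i ^ (β : Fin n → ℕ) i

/-- `x` is a solution of the system (1): `x^α = Σ_{β∈I} a_{α,β} x^β` for all `|α| = m+1`. -/
def IsSol {K : Type*} [Field K] {n : ℕ} (m : ℕ)
    (a : (Fin n → ℕ) → (Fin n → ℕ) → K) (x : Fin n → K) : Prop :=
  ∀ α : Fin n → ℕ, mdeg α = m + 1 →
    ∏ i, x i ^ α i = ∑ β ∈ Idx n m, a α β * ∏ i, x i ^ β i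

/-- `x` is a solution of the system for a general lower set `I` with border `J`. -/
def IsSolB {K : Type*} [Field K] {n : ℕ} (I : Finset (Fin n → ℕ))
    (a : (Fin n → ℕ) → (Fin n → ℕ) → K) (x : Fin n → K) : Prop :=
  ∀ α : Fin n → ℕ, InBorder I α →
    ∏ i, x i ^ α i = ∑ β ∈ I, a α β * ∏ i, x i ^ β i

/-- A square matrix is diagonalizable (semisimple). -/
def Diagonalizable {K : Type*} [Field K] {ι : Type*} [Fintype ι] [DecidableEq ι]
    (A : Matrix ι ι K) : Prop :=
  ∃ P : Matrix ι ι K, IsUnit P.det ∧ (P⁻¹ * A * P).IsDiag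

/-- The polynomial `P_α = x^α − Σ_{β∈I} a_{α,β} x^β`. -/
noncomputable def Pb {K : Type*} [Field K] {n : ℕ} (I : Finset (Fin n → ℕ))
    (a : (Fin n → ℕ) → (Fin n → ℕ) → K) (α : Fin n → ℕ) : MvPolynomial (Fin n) K :=
  MvPolynomial.monomial (Finsupp.equivFunOnFinite.symm α) 1 -
    ∑ β ∈ I, MvPolynomial.C (a α β) * MvPolynomial.monomial (Finsupp.equivFunOnFinite.symm β) 1

/-- The ideal generated by the polynomials `P_α`, `α ∈ J`. -/
noncomputable def PIdeal {K : Type*} [Field K] {n : ℕ} (I : Finset (Fin n → ℕ))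
    (a : (Fin n → ℕ) → (Fin n → ℕ) → K) : Ideal (MvPolynomial (Fin n) K) :=
  Ideal.span {p | ∃ α : Fin n → ℕ, InBorder I α ∧ p = Pb I a α}

lemma mem_Idx_iff {n m : ℕ} {α : Fin n → ℕ} : α ∈ Idx n m ↔ mdeg α ≤ m := by
  constructor
  · intro h; exact (Finset.mem_filter.mp h).2
  · intro h
    refine Finset.mem_filter.mpr ⟨Fintype.mem_piFinset.mpr fun i => ?_, h⟩
    refine Finset.mem_range.mpr (lt_of_le_of_lt (le_trans ?_ h) (Nat.lt_succ_self m))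
    exact Finset.single_le_sum (fun i _ => Nat.zero_le _) (Finset.mem_univ i)

lemma mdeg_add_single {n : ℕ} (β : Fin n → ℕ) (i : Fin n) :
    mdeg (β + Pi.single i 1) = mdeg β + 1 := by
  unfold mdeg
  simp only [Pi.add_apply, Finset.sum_add_distrib]
  rw [Finset.sum_pi_single']
  simp

lemma prod_pow_add_single {K : Type*} [Field K] {n : ℕ} (y : Fin n → K)
    (β : Fin n → ℕ) (i : Fin n) :
    ∏ k : Fin n, y k ^ ((β + Pi.single i 1 : Fin n → ℕ)) k = y i * ∏ k : Fin n, y k ^ β k := by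
  simp only [Pi.add_apply, pow_add, Finset.prod_mul_distrib]
  rw [mul_comm]
  congr 1
  rw [Fintype.prod_eq_single i (fun k hk => by rw [Pi.single_eq_of_ne hk, pow_zero])]
  rw [Pi.single_eq_same, pow_one]

lemma eigen_aux {K : Type*} [Field K] {n m : ℕ} (a : (Fin n → ℕ) → (Fin n → ℕ) → K)
    (y : Fin n → K) (hy : IsSol m a y) (i : Fin n) (β : ↥(Idx n m)) :
    ∑ γ : ↥(Idx n m), multMat (Idx n m) a i β γ * monVec (Idx n m) y γ
      = y i * monVec (Idx n m) y β := by
  classical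
  by_cases h : (β : Fin n → ℕ) + Pi.single i 1 ∈ Idx n m
  · have key : ∀ γ : ↥(Idx n m), multMat (Idx n m) a i β γ * monVec (Idx n m) y γ
        = if γ = (⟨_, h⟩ : ↥(Idx n m)) then monVec (Idx n m) y γ else 0 := by
      intro γ
      simp only [multMat, if_pos h]
      by_cases hγ : γ = (⟨_, h⟩ : ↥(Idx n m))
      · simp [hγ]
      · rw [if_neg (by simpa [Subtype.ext_iff] using hγ), if_neg hγ, zero_mul]
    simp_rw [key]
    rw [Fintype.sum_ite_eq']
    show ∏ k : Fin n, y k ^ (((β : Fin n → ℕ) + Pi.single i 1 : Fin n → ℕ)) k = _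
    rw [prod_pow_add_single]
    rfl
  · have hm : mdeg ((β : Fin n → ℕ) + Pi.single i 1) = m + 1 := by
      have h1 : mdeg (β : Fin n → ℕ) ≤ m := mem_Idx_iff.mp β.2
      have h2 := mdeg_add_single (β : Fin n → ℕ) i
      rcases Nat.lt_or_ge (mdeg ((β : Fin n → ℕ) + Pi.single i 1)) (m + 1) with hlt | hge
      · exact absurd (mem_Idx_iff.mpr (Nat.lt_succ_iff.mp hlt)) h
      · omega
    have hs := hy _ hm
    simp only [multMat, if_neg h]
    unfold monVec
    rw [← prod_pow_add_single y (β : Fin n → ℕ) i, hs]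
    exact Finset.sum_attach (Idx n m)
      (fun γ => a ((β : Fin n → ℕ) + Pi.single i 1) γ * ∏ k : Fin n, y k ^ γ k)

/-- If the system has `#I` distinct solutions, then the multiplication matrices pairwise
commute and each is diagonalizable. -/
theorem stmt_4 {K : Type*} [Field K] [IsAlgClosed K] {n m : ℕ}
    (a : (Fin n → ℕ) → (Fin n → ℕ) → K)
    (x : Fin (Idx n m).card → (Fin n → K)) (hinj : Function.Injective x)
    (hsol : ∀ j, IsSol m a (x j)) :
    (∀ i j, multMat (Idx n m) a i * multMat (Idx n m) a j
        = multMat (Idx n m) a j * multMat (Idx n m) a i) ∧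
    ∀ i, Diagonalizable (multMat (Idx n m) a i) := by
  classical
  have hcard : Fintype.card ↥(Idx n m) = (Idx n m).card := Fintype.card_coe _
  let e : ↥(Idx n m) ≃ Fin (Idx n m).card := Fintype.equivFinOfCardEq hcard
  set U : Matrix ↥(Idx n m) ↥(Idx n m) K :=
    fun β γ => monVec (Idx n m) (x (e γ)) β with hUdef
  -- eigen relation
  have hU : ∀ i : Fin n, multMat (Idx n m) a i * U
      = U * Matrix.diagonal (fun γ => x (e γ) i) := by
    intro i
    ext β γ
    rw [Matrix.mul_apply, Matrix.mul_diagonal, mul_comm]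
    exact eigen_aux a (x (e γ)) (hsol _) i β
  -- every monomial reduces on solutions to a combination of Idx-monomials
  have span : ∀ α : Fin n → ℕ, ∃ c : ↥(Idx n m) → K,
      ∀ j, ∏ i, x j i ^ α i = ∑ γ : ↥(Idx n m), c γ * monVec (Idx n m) (x j) γ := by
    have base : ∀ (α : Fin n → ℕ) (hmem : α ∈ Idx n m), ∃ c : ↥(Idx n m) → K,
        ∀ j, ∏ i, x j i ^ α i = ∑ γ : ↥(Idx n m), c γ * monVec (Idx n m) (x j) γ := by
      intro α hmem
      refine ⟨fun γ => if γ = ⟨α, hmem⟩ then 1 else 0, fun j => ?_⟩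
      symm
      simp only [ite_mul, one_mul, zero_mul, Fintype.sum_ite_eq']
      rfl
    have key : ∀ d : ℕ, ∀ α : Fin n → ℕ, mdeg α ≤ d → ∃ c : ↥(Idx n m) → K,
        ∀ j, ∏ i, x j i ^ α i = ∑ γ : ↥(Idx n m), c γ * monVec (Idx n m) (x j) γ := by
      intro d
      induction d with
      | zero =>
        intro α hα
        exact base α (mem_Idx_iff.mpr (le_trans hα (Nat.zero_le m)))
      | succ d ih =>
        intro α hα
        by_cases hmem : α ∈ Idx n m
        · exact base α hmem
        · have hd0 : mdeg α ≠ 0 := fun h0 =>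
            hmem (mem_Idx_iff.mpr (h0 ▸ Nat.zero_le m))
          have hex : ∃ i, α i ≠ 0 := by
            by_contra hc; push_neg at hc
            exact hd0 (Finset.sum_eq_zero fun i _ => hc i)
          obtain ⟨i, hi⟩ := hex
          set α' : Fin n → ℕ := Function.update α i (α i - 1) with hα'
          have hsum : α = α' + Pi.single i 1 := by
            funext k
            by_cases hk : k = i
            · subst hk
              simp only [Pi.add_apply, hα', Function.update_self, Pi.single_eq_same]
              omega
            · simp [hα', Function.update_of_ne hk, Pi.single_eq_of_ne hk]
          have hmd : mdeg α' ≤ d := by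
            have h1 : mdeg α = mdeg α' + 1 := by rw [hsum, mdeg_add_single]
            omega
          obtain ⟨c', hc'⟩ := ih α' hmd
          refine ⟨fun δ => ∑ γ : ↥(Idx n m), c' γ * multMat (Idx n m) a i γ δ, fun j => ?_⟩
          calc ∏ k, x j k ^ α k = x j i * ∏ k, x j k ^ α' k := by
                rw [hsum]; exact prod_pow_add_single _ _ _
            _ = x j i * ∑ γ : ↥(Idx n m), c' γ * monVec (Idx n m) (x j) γ := by rw [hc' j]
            _ = ∑ γ : ↥(Idx n m), c' γ * (x j i * monVec (Idx n m) (x j) γ) := by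
                rw [Finset.mul_sum]
                exact Finset.sum_congr rfl fun γ _ => by ring
            _ = ∑ γ : ↥(Idx n m), c' γ *
                  ∑ δ : ↥(Idx n m), multMat (Idx n m) a i γ δ * monVec (Idx n m) (x j) δ := by
                simp_rw [eigen_aux a (x j) (hsol j) i]
            _ = ∑ δ : ↥(Idx n m), (∑ γ : ↥(Idx n m), c' γ * multMat (Idx n m) a i γ δ) *
                  monVec (Idx n m) (x j) δ := by
                simp_rw [Finset.mul_sum, Finset.sum_mul, mul_assoc]
                exact Finset.sum_comm
    intro α
    exact key (mdeg α) α le_rfl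
  -- U is invertible
  have hdet : IsUnit U.det := by
    rw [isUnit_iff_ne_zero]
    intro hd
    obtain ⟨v, hv0, hv⟩ := Matrix.exists_mulVec_eq_zero_iff.mpr hd
    set w : Fin (Idx n m).card → K := fun j => v (e.symm j) with hwdef
    have hwβ : ∀ β : ↥(Idx n m), ∑ j, w j * monVec (Idx n m) (x j) β = 0 := by
      intro β
      have hvβ := congrFun hv β
      rw [Matrix.mulVec, dotProduct] at hvβ
      calc ∑ j, w j * monVec (Idx n m) (x j) β
          = ∑ γ : ↥(Idx n m), w (e γ) * monVec (Idx n m) (x (e γ)) β :=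
            (Fintype.sum_equiv e _ _ (fun γ => rfl)).symm
        _ = ∑ γ : ↥(Idx n m), U β γ * v γ := by
            refine Finset.sum_congr rfl fun γ _ => ?_
            rw [hwdef]
            simp only [Equiv.symm_apply_apply, hUdef]
            ring
        _ = 0 := hvβ
    have hmono : ∀ α : Fin n → ℕ, ∑ j, w j * ∏ i, x j i ^ α i = 0 := by
      intro α
      obtain ⟨c, hc⟩ := span α
      simp_rw [hc]
      calc ∑ j, w j * ∑ γ : ↥(Idx n m), c γ * monVec (Idx n m) (x j) γ
          = ∑ γ : ↥(Idx n m), c γ * ∑ j, w j * monVec (Idx n m) (x j) γ := by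
            simp_rw [Finset.mul_sum]
            rw [Finset.sum_comm]
            exact Finset.sum_congr rfl fun γ _ => Finset.sum_congr rfl fun j _ => by ring
        _ = 0 := by simp_rw [hwβ]; simp
    have hpoly : ∀ p : MvPolynomial (Fin n) K,
        ∑ j, w j * MvPolynomial.eval (x j) p = 0 := by
      intro p
      simp_rw [MvPolynomial.eval_eq']
      calc ∑ j, w j * ∑ d ∈ p.support, MvPolynomial.coeff d p * ∏ i, x j i ^ d i
          = ∑ d ∈ p.support, MvPolynomial.coeff d p * ∑ j, w j * ∏ i, x j i ^ d i := by
            simp_rw [Finset.mul_sum]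
            rw [Finset.sum_comm]
            exact Finset.sum_congr rfl fun d _ => Finset.sum_congr rfl fun j _ => by ring
        _ = 0 := Finset.sum_eq_zero fun d _ => by rw [hmono (fun i => d i), mul_zero]
    have hw0 : ∀ j₀, w j₀ = 0 := by
      intro j₀
      have hqex : ∀ k, k ≠ j₀ → ∃ i, x k i ≠ x j₀ i := fun k hk =>
        Function.ne_iff.mp (fun hxx => hk (hinj hxx))
      set q : Fin (Idx n m).card → MvPolynomial (Fin n) K := fun k =>
        if h : ∃ i, x k i ≠ x j₀ i then
          MvPolynomial.X h.choose - MvPolynomial.C (x k h.choose) else 1 with hqdef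
      set p : MvPolynomial (Fin n) K := ∏ k ∈ Finset.univ.erase j₀, q k with hpdef
      have heval0 : ∀ k, k ≠ j₀ → MvPolynomial.eval (x k) (q k) = 0 := by
        intro k hk
        rw [hqdef]
        simp only [dif_pos (hqex k hk)]
        simp
      have hevalne : ∀ k, k ≠ j₀ → MvPolynomial.eval (x j₀) (q k) ≠ 0 := by
        intro k hk
        rw [hqdef]
        simp only [dif_pos (hqex k hk), map_sub, MvPolynomial.eval_X, MvPolynomial.eval_C]
        exact sub_ne_zero.mpr (Ne.symm (hqex k hk).choose_spec)
      have hpj₀ : MvPolynomial.eval (x j₀) p ≠ 0 := by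
        rw [hpdef, map_prod, Finset.prod_ne_zero_iff]
        exact fun k hk => hevalne k (Finset.ne_of_mem_erase hk)
      have hpk : ∀ k, k ≠ j₀ → MvPolynomial.eval (x k) p = 0 := by
        intro k hk
        rw [hpdef, map_prod]
        exact Finset.prod_eq_zero (Finset.mem_erase.mpr ⟨hk, Finset.mem_univ k⟩) (heval0 k hk)
      have hsum0 := hpoly p
      rw [Finset.sum_eq_single j₀ (fun k _ hk => by rw [hpk k hk, mul_zero])
        (fun h => absurd (Finset.mem_univ j₀) h)] at hsum0
      exact (mul_eq_zero.mp hsum0).resolve_right hpj₀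
    apply hv0
    funext γ
    have := hw0 (e γ)
    rw [hwdef] at this
    simpa using this
  -- A_i = U D_i U⁻¹
  have hA : ∀ i, multMat (Idx n m) a i
      = U * Matrix.diagonal (fun γ => x (e γ) i) * U⁻¹ := by
    intro i
    rw [← hU i, Matrix.mul_nonsing_inv_cancel_right _ _ hdet]
  have hcomm : ∀ i j : Fin n,
      (U * Matrix.diagonal (fun γ => x (e γ) i) * U⁻¹) *
        (U * Matrix.diagonal (fun γ => x (e γ) j) * U⁻¹)
        = U * Matrix.diagonal (fun γ => x (e γ) i * x (e γ) j) * U⁻¹ := by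
    intro i j
    simp only [Matrix.mul_assoc]
    rw [Matrix.nonsing_inv_mul_cancel_left _ _ hdet,
      ← Matrix.mul_assoc (Matrix.diagonal _) (Matrix.diagonal _) U⁻¹,
      Matrix.diagonal_mul_diagonal]
  constructor
  · intro i j
    rw [hA i, hA j, hcomm i j, hcomm j i]
    have : (fun γ => x (e γ) i * x (e γ) j) = fun γ => x (e γ) j * x (e γ) i :=
      funext fun γ => mul_comm _ _
    rw [this]
  · intro i
    refine ⟨U, hdet, ?_⟩
    rw [hA i]
    simp only [Matrix.mul_assoc]
    rw [Matrix.nonsing_inv_mul _ hdet, Matrix.mul_one,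
      Matrix.nonsing_inv_mul_cancel_left _ _ hdet]
    exact Matrix.isDiag_diagonal _
end

section
/- If the multiplication matrices A_1, ..., A_n pairwise commute and each is diagonalizable, then the system x^α = Σ_{β ∈ I} a_{α,β} x^β (α ∈ J) has exactly #I distinct solutions in K^n; namely, there is a basis of common eigenvectors, each of which is proportional to a monomial vector v(x) = (x^β)_{β∈I} of a solution x whose i-th coordinate is the corresponding eigenvalue of A_i. -/
open Finset Matrix

section helpers

variable {n m : ℕ}

lemma mem_Idx {α : Fin n → ℕ} : α ∈ Idx n m ↔ mdeg α ≤ m := by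
  constructor
  · intro h; exact (Finset.mem_filter.mp h).2
  · intro h
    refine Finset.mem_filter.mpr ⟨?_, h⟩
    refine Fintype.mem_piFinset.mpr fun i => Finset.mem_range.mpr ?_
    have : α i ≤ mdeg α :=
      Finset.single_le_sum (f := α) (fun j _ => Nat.zero_le _) (Finset.mem_univ i)
    omega

lemma zero_mem_Idx : (0 : Fin n → ℕ) ∈ Idx n m := mem_Idx.mpr (by simp [mdeg])

lemma mdeg_add (α β : Fin n → ℕ) : mdeg (α + β) = mdeg α + mdeg β := by
  simp [mdeg, Finset.sum_add_distrib]

lemma mdeg_single (i : Fin n) : mdeg (Pi.single i 1 : Fin n → ℕ) = 1 :=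
  Fintype.sum_pi_single' i 1

lemma mdeg_eq_zero {β : Fin n → ℕ} (h : mdeg β = 0) : β = 0 := by
  funext j
  have := (Finset.sum_eq_zero_iff.mp h) j (Finset.mem_univ j)
  simpa using this

lemma exists_pos_of_mdeg_pos {β : Fin n → ℕ} (h : 0 < mdeg β) : ∃ i, 0 < β i := by
  by_contra hcon; push_neg at hcon
  have : mdeg β = 0 := Finset.sum_eq_zero fun i _ => Nat.le_zero.mp (hcon i)
  omega

/-- peel off one unit of a positive coordinate -/
lemma exists_pred {β : Fin n → ℕ} {i : Fin n} (hi : 0 < β i) :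
    ∃ γ : Fin n → ℕ, γ + Pi.single i 1 = β ∧ mdeg γ + 1 = mdeg β := by
  obtain ⟨γ, hγ⟩ : ∃ γ : Fin n → ℕ, γ + Pi.single i 1 = β := by
    refine ⟨Function.update β i (β i - 1), ?_⟩
    funext j
    by_cases hj : j = i
    · subst hj; simp; omega
    · simp [Function.update_of_ne hj, Pi.single_eq_of_ne hj]
  exact ⟨γ, hγ, by rw [← hγ, mdeg_add, mdeg_single]⟩

variable {K : Type*} [Field K]

lemma prod_pow_add (x : Fin n → K) (β γ : Fin n → ℕ) :
    ∏ i, x i ^ (β + γ) i = (∏ i, x i ^ β i) * ∏ i, x i ^ γ i := by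
  rw [← Finset.prod_mul_distrib]
  exact Finset.prod_congr rfl fun i _ => by simp [pow_add]

lemma prod_pow_single (x : Fin n → K) (i : Fin n) :
    ∏ j, x j ^ (Pi.single i 1 : Fin n → ℕ) j = x i := by
  rw [Finset.prod_eq_single i]
  · simp
  · intro j _ hj; rw [Pi.single_eq_of_ne hj]; simp
  · simp

lemma mulVec_row_mem (a : (Fin n → ℕ) → (Fin n → ℕ) → K) (w : ↥(Idx n m) → K)
    {γ : Fin n → ℕ} (hγ : γ ∈ Idx n m) {i : Fin n}
    (hmem : γ + Pi.single i 1 ∈ Idx n m) :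
    (multMat (Idx n m) a i *ᵥ w) ⟨γ, hγ⟩ = w ⟨_, hmem⟩ := by
  show ∑ δ : ↥(Idx n m), multMat (Idx n m) a i ⟨γ, hγ⟩ δ * w δ = _
  rw [Finset.sum_eq_single (⟨_, hmem⟩ : ↥(Idx n m))]
  · simp [multMat, hmem]
  · intro δ _ hδ
    have : (δ : Fin n → ℕ) ≠ γ + Pi.single i 1 := fun h => hδ (Subtype.ext h)
    simp [multMat, hmem, this]
  · simp

lemma mulVec_row_not_mem (a : (Fin n → ℕ) → (Fin n → ℕ) → K) (w : ↥(Idx n m) → K)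
    {γ : Fin n → ℕ} (hγ : γ ∈ Idx n m) {i : Fin n}
    (hmem : γ + Pi.single i 1 ∉ Idx n m) :
    (multMat (Idx n m) a i *ᵥ w) ⟨γ, hγ⟩
      = ∑ δ : ↥(Idx n m), a (γ + Pi.single i 1) δ * w δ := by
  show ∑ δ : ↥(Idx n m), multMat (Idx n m) a i ⟨γ, hγ⟩ δ * w δ = _
  refine Finset.sum_congr rfl fun δ _ => ?_
  simp [multMat, hmem]

end helpers

section keys
variable {n m : ℕ} {K : Type*} [Field K]

lemma mulVec_monVec {a : (Fin n → ℕ) → (Fin n → ℕ) → K} {x : Fin n → K}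
    (hx : IsSol m a x) (i : Fin n) :
    multMat (Idx n m) a i *ᵥ monVec (Idx n m) x = x i • monVec (Idx n m) x := by
  funext β
  obtain ⟨β, hβ⟩ := β
  by_cases hmem : β + Pi.single i 1 ∈ Idx n m
  · rw [mulVec_row_mem a _ hβ hmem]
    simp only [monVec, Pi.smul_apply, smul_eq_mul]
    rw [prod_pow_add, prod_pow_single]
    ring
  · rw [mulVec_row_not_mem a _ hβ hmem]
    have hdeg : mdeg (β + Pi.single i 1) = m + 1 := by
      have h1 : mdeg β ≤ m := mem_Idx.mp hβ
      have h2 : ¬ mdeg (β + Pi.single i 1) ≤ m := fun h => hmem (mem_Idx.mpr h)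
      rw [mdeg_add, mdeg_single] at h2 ⊢
      omega
    have hx' := hx _ hdeg
    simp only [monVec, Pi.smul_apply, smul_eq_mul]
    have hsum : (∑ δ : ↥(Idx n m),
          a (β + Pi.single i 1) (δ : Fin n → ℕ) * ∏ j, x j ^ (δ : Fin n → ℕ) j)
        = ∑ δ ∈ Idx n m, a (β + Pi.single i 1) δ * ∏ j, x j ^ δ j :=
      Finset.sum_coe_sort (Idx n m) (fun δ => a (β + Pi.single i 1) δ * ∏ j, x j ^ δ j)
    rw [hsum, ← hx', prod_pow_add, prod_pow_single]
    ring

lemma eigen_struct {a : (Fin n → ℕ) → (Fin n → ℕ) → K} {w : ↥(Idx n m) → K}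
    {x : Fin n → K} (hw : w ≠ 0)
    (h : ∀ i, multMat (Idx n m) a i *ᵥ w = x i • w) :
    ∃ c : K, c ≠ 0 ∧ IsSol m a x ∧ w = c • monVec (Idx n m) x := by
  set c := w ⟨0, zero_mem_Idx⟩ with hcdef
  have key : ∀ k (β : Fin n → ℕ) (hβ : β ∈ Idx n m), mdeg β = k →
      w ⟨β, hβ⟩ = c * ∏ i, x i ^ β i := by
    intro k
    induction k using Nat.strong_induction_on with
    | _ k ih =>
      intro β hβ hk
      rcases Nat.eq_zero_or_pos k with rfl | hkpos
      · have hβ0 : β = 0 := mdeg_eq_zero hk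
        subst hβ0
        simp [hcdef]
      · obtain ⟨i, hi⟩ := exists_pos_of_mdeg_pos (hk ▸ hkpos)
        obtain ⟨γ, hγβ, hγd⟩ := exists_pred hi
        have hγI : γ ∈ Idx n m := by
          refine mem_Idx.mpr ?_
          have := mem_Idx.mp hβ
          omega
        have hmem : γ + Pi.single i 1 ∈ Idx n m := hγβ ▸ hβ
        have hrow := congrFun (h i) ⟨γ, hγI⟩
        rw [mulVec_row_mem a w hγI hmem] at hrow
        have hwβ : w ⟨β, hβ⟩ = x i * w ⟨γ, hγI⟩ := by
          have : (⟨γ + Pi.single i 1, hmem⟩ : ↥(Idx n m)) = ⟨β, hβ⟩ := Subtype.ext hγβ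
          rw [this] at hrow
          simpa using hrow
        have hwγ : w ⟨γ, hγI⟩ = c * ∏ j, x j ^ γ j := ih (mdeg γ) (by omega) γ hγI rfl
        rw [hwβ, hwγ, ← hγβ, prod_pow_add, prod_pow_single]
        ring
  have hw' : ∀ β : ↥(Idx n m), w β = c * ∏ i, x i ^ (β : Fin n → ℕ) i := by
    rintro ⟨β, hβ⟩; exact key (mdeg β) β hβ rfl
  have hc : c ≠ 0 := by
    intro hc0
    apply hw
    funext β
    rw [hw' β, hc0, zero_mul]; rfl
  refine ⟨c, hc, ?_, ?_⟩
  · intro α hα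
    obtain ⟨i, hi⟩ := exists_pos_of_mdeg_pos (by omega : 0 < mdeg α)
    obtain ⟨γ, hγα, hγd⟩ := exists_pred hi
    have hγI : γ ∈ Idx n m := mem_Idx.mpr (by omega)
    have hmem : γ + Pi.single i 1 ∉ Idx n m := by
      rw [hγα]; intro hmem
      have := mem_Idx.mp hmem
      omega
    have hrow := congrFun (h i) ⟨γ, hγI⟩
    rw [mulVec_row_not_mem a w hγI hmem] at hrow
    rw [hγα] at hrow
    have hL : ∑ δ : ↥(Idx n m), a α δ * w δ
        = c * ∑ δ ∈ Idx n m, a α δ * ∏ j, x j ^ δ j := by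
      have hcs : (∑ δ : ↥(Idx n m),
            c * (a α (δ : Fin n → ℕ) * ∏ j, x j ^ (δ : Fin n → ℕ) j))
          = ∑ δ ∈ Idx n m, c * (a α δ * ∏ j, x j ^ δ j) :=
        Finset.sum_coe_sort (Idx n m) (fun δ => c * (a α δ * ∏ j, x j ^ δ j))
      rw [Finset.mul_sum, ← hcs]
      refine Finset.sum_congr rfl fun δ _ => ?_
      rw [hw' δ]; ring
    have hR : (x i • w) ⟨γ, hγI⟩ = c * ∏ j, x j ^ α j := by
      show x i * w ⟨γ, hγI⟩ = _
      rw [hw' ⟨γ, hγI⟩, ← hγα, prod_pow_add, prod_pow_single]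
      ring
    rw [hL, hR] at hrow
    exact (mul_left_cancel₀ hc hrow.symm)
  · funext β
    rw [hw' β]; rfl

end keys

section diagsec
variable {K : Type*} [Field K] {ι : Type*} [Fintype ι] [DecidableEq ι]

/-- A diagonalizable matrix has eigenspaces spanning the whole space. -/
lemma iSup_eigenspace_of_diagonalizable {A : Matrix ι ι K} (h : Diagonalizable A) :
    ⨆ μ, Module.End.eigenspace (Matrix.mulVecLin A) μ = ⊤ := by
  obtain ⟨P, hP, hD⟩ := h
  set D := P⁻¹ * A * P with hDdef
  have hAP : A * P = P * D := by
    rw [hDdef, ← Matrix.mul_assoc, ← Matrix.mul_assoc, Matrix.mul_nonsing_inv _ hP,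
      Matrix.one_mul]
  rw [eq_top_iff]
  intro v _
  have hv : v = ∑ j, (P⁻¹ *ᵥ v) j • (fun k => P k j) := by
    funext k
    have h1 : v = P *ᵥ (P⁻¹ *ᵥ v) := by
      rw [Matrix.mulVec_mulVec, Matrix.mul_nonsing_inv _ hP, Matrix.one_mulVec]
    conv_lhs => rw [h1]
    simp only [Finset.sum_apply, Pi.smul_apply, smul_eq_mul, Matrix.mulVec, dotProduct]
    exact Finset.sum_congr rfl fun j _ => mul_comm _ _
  rw [hv]
  refine Submodule.sum_mem _ fun j _ => Submodule.smul_mem _ _ ?_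
  refine Submodule.mem_iSup_of_mem (D j j) ?_
  rw [Module.End.mem_eigenspace_iff]
  funext k
  have h1 : (A * P) k j = (P * D) k j := by rw [hAP]
  simp only [Matrix.mul_apply] at h1
  have h2 : ∑ l, P k l * D l j = P k j * D j j := by
    rw [Finset.sum_eq_single j]
    · intro l _ hl; rw [hD hl, mul_zero]
    · simp
  simp only [Matrix.mulVecLin_apply, Matrix.mulVec, dotProduct, Pi.smul_apply,
    smul_eq_mul]
  rw [h1, h2]
  ring

/-- If the eigenspaces span, generalized eigenspaces are eigenspaces. -/
lemma maxGen_eq_eigen {V : Type*} [AddCommGroup V] [Module K V]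
    (f : Module.End K V) (h : ⨆ μ, f.eigenspace μ = ⊤) (μ : K) :
    f.maxGenEigenspace μ = f.eigenspace μ := by
  refine le_antisymm ?_ ((f.genEigenspace μ).monotone le_top)
  have hdis : Disjoint (f.maxGenEigenspace μ) (⨆ ν, ⨆ _ : ν ≠ μ, f.maxGenEigenspace ν) :=
    f.independent_maxGenEigenspace μ
  have hle : f.maxGenEigenspace μ ≤
      (f.eigenspace μ ⊔ ⨆ ν, ⨆ _ : ν ≠ μ, f.maxGenEigenspace ν) ⊓ f.maxGenEigenspace μ := by
    refine le_inf ?_ le_rfl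
    refine le_trans (le_top.trans_eq h.symm) (iSup_le fun ν => ?_)
    rcases eq_or_ne ν μ with rfl | hν
    · exact le_sup_left
    · exact le_sup_of_le_right
        (le_iSup_of_le ν (le_iSup_of_le hν ((f.genEigenspace ν).monotone le_top)))
  rw [sup_inf_assoc_of_le _ ((f.genEigenspace μ).monotone le_top)] at hle
  rwa [inf_comm, hdis.eq_bot, sup_bot_eq] at hle

end diagsec

/-- If the multiplication matrices pairwise commute and each is diagonalizable, then the
system has exactly `#I` distinct solutions, and there is a basis of common eigenvectors,
each proportional to the monomial vector of a solution whose `i`-th coordinate is the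
corresponding eigenvalue of `A_i`. -/
theorem stmt_5 {K : Type*} [Field K] [IsAlgClosed K] {n m : ℕ}
    (a : (Fin n → ℕ) → (Fin n → ℕ) → K)
    (hcomm : ∀ i j, multMat (Idx n m) a i * multMat (Idx n m) a j
        = multMat (Idx n m) a j * multMat (Idx n m) a i)
    (hdiag : ∀ i, Diagonalizable (multMat (Idx n m) a i)) :
    {x : Fin n → K | IsSol m a x}.ncard = (Idx n m).card ∧
    ∃ b : Module.Basis ↥(Idx n m) K (↥(Idx n m) → K),
      ∀ j, ∃ (x : Fin n → K) (c : K), c ≠ 0 ∧ IsSol m a x ∧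
        b j = c • monVec (Idx n m) x ∧
        ∀ i, multMat (Idx n m) a i *ᵥ b j = x i • b j := by
  classical
  set f : Fin n → Module.End K (↥(Idx n m) → K) :=
    fun i => Matrix.mulVecLin (multMat (Idx n m) a i) with hf
  have hfc : ∀ i j, Commute (f i) (f j) := by
    intro i j
    show f i * f j = f j * f i
    apply LinearMap.ext
    intro v
    simp only [Module.End.mul_apply, hf, Matrix.mulVecLin_apply, Matrix.mulVec_mulVec]
    rw [hcomm i j]
  have hmax : ∀ i μ, (f i).maxGenEigenspace μ = Module.End.eigenspace (f i) μ :=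
    fun i => maxGen_eq_eigen (f i) (iSup_eigenspace_of_diagonalizable (hdiag i))
  have htop : ⨆ χ : Fin n → K, ⨅ i, (f i).maxGenEigenspace (χ i) = ⊤ :=
    Module.End.iSup_iInf_maxGenEigenspace_eq_top_of_iSup_maxGenEigenspace_eq_top_of_commute f
      (fun i j _ => hfc i j)
      (fun i => by
        simp_rw [hmax i]
        exact iSup_eigenspace_of_diagonalizable (hdiag i))
  have hindep : iSupIndep fun χ : Fin n → K => ⨅ i, (f i).maxGenEigenspace (χ i) :=
    Module.End.independent_iInf_maxGenEigenspace_of_forall_mapsTo f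
      (fun i j φ => Module.End.mapsTo_maxGenEigenspace_of_comm (hfc j i) φ)
  have hInt : DirectSum.IsInternal fun χ : Fin n → K => ⨅ i, (f i).maxGenEigenspace (χ i) :=
    DirectSum.isInternal_submodule_of_iSupIndep_of_iSup_eq_top hindep htop
  let bC := hInt.collectedBasis fun χ => Module.Basis.ofVectorSpace K _
  let e := bC.indexEquiv (Pi.basisFun K ↥(Idx n m))
  let b : Module.Basis ↥(Idx n m) K (↥(Idx n m) → K) := bC.reindex e
  have hbprop : ∀ j : ↥(Idx n m), ∃ (x : Fin n → K) (c : K), c ≠ 0 ∧ IsSol m a x ∧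
      b j = c • monVec (Idx n m) x ∧
      ∀ i, multMat (Idx n m) a i *ᵥ b j = x i • b j := by
    intro j
    have hbj : b j = bC (e.symm j) := bC.reindex_apply e j
    have hmem : bC (e.symm j) ∈ ⨅ i, (f i).maxGenEigenspace ((e.symm j).1 i) :=
      hInt.collectedBasis_mem _ (e.symm j)
    have heig : ∀ i, multMat (Idx n m) a i *ᵥ b j = (e.symm j).1 i • b j := by
      intro i
      have h1 : b j ∈ Module.End.eigenspace (f i) ((e.symm j).1 i) := by
        rw [hbj, ← hmax]
        exact (Submodule.mem_iInf _).mp hmem i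
      have h2 := Module.End.mem_eigenspace_iff.mp h1
      simpa [hf, Matrix.mulVecLin_apply] using h2
    obtain ⟨c, hc, hsol, hwc⟩ := eigen_struct (b.ne_zero j) heig
    exact ⟨_, c, hc, hsol, hwc, heig⟩
  choose X C hC hX hbX heigX using hbprop
  have hinj : Function.Injective X := by
    intro j k hjk
    by_contra hne
    have h3 : C k • b j = C j • b k := by
      rw [hbX j, hbX k, hjk, smul_smul, smul_smul, mul_comm]
    have h4 : C k = 0 := by
      have := congrArg (fun v => b.repr v j) h3
      simpa [Module.Basis.repr_self, Finsupp.single_apply, Ne.symm hne] using this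
    exact hC k h4
  have hset : {x : Fin n → K | IsSol m a x} = Set.range X := by
    ext x
    simp only [Set.mem_setOf_eq, Set.mem_range]
    constructor
    · intro hx
      have hv0 : monVec (Idx n m) x ≠ 0 := by
        intro h0
        have := congrFun h0 ⟨0, zero_mem_Idx⟩
        simp [monVec] at this
      set d := b.repr (monVec (Idx n m) x) with hd
      have hsum_repr : ∑ k, d k • b k = monVec (Idx n m) x := b.sum_repr _
      obtain ⟨j, hdj⟩ : ∃ j, d j ≠ 0 := by
        by_contra hcon
        push_neg at hcon
        apply hv0
        rw [← hsum_repr]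
        refine Finset.sum_eq_zero fun k _ => ?_
        rw [hcon k, zero_smul]
      refine ⟨j, ?_⟩
      have hkey : ∀ i, d j * X j i - x i * d j = 0 := by
        intro i
        have e1 : ∑ k, (d k * X k i) • b k = multMat (Idx n m) a i *ᵥ monVec (Idx n m) x := by
          calc ∑ k, (d k * X k i) • b k = ∑ k, d k • (X k i • b k) := by
                refine Finset.sum_congr rfl fun k _ => by rw [smul_smul]
            _ = ∑ k, d k • (multMat (Idx n m) a i *ᵥ b k) := by
                refine Finset.sum_congr rfl fun k _ => by rw [heigX k i]
            _ = Matrix.mulVecLin (multMat (Idx n m) a i) (∑ k, d k • b k) := by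
                rw [map_sum]
                refine Finset.sum_congr rfl fun k _ => ?_
                simp only [LinearMap.map_smul, Matrix.mulVecLin_apply]
            _ = multMat (Idx n m) a i *ᵥ monVec (Idx n m) x := by
                rw [hsum_repr, Matrix.mulVecLin_apply]
        have e2 : ∑ k, (x i * d k) • b k = multMat (Idx n m) a i *ᵥ monVec (Idx n m) x := by
          rw [mulVec_monVec hx i]
          calc ∑ k, (x i * d k) • b k = x i • ∑ k, d k • b k := by
                rw [Finset.smul_sum]
                refine Finset.sum_congr rfl fun k _ => by rw [smul_smul]
            _ = x i • monVec (Idx n m) x := by rw [hsum_repr]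
        have hsum0 : ∑ k, (d k * X k i - x i * d k) • b k = 0 := by
          simp only [sub_smul, Finset.sum_sub_distrib, e1, e2, sub_self]
        exact Fintype.linearIndependent_iff.mp b.linearIndependent _ hsum0 j
      funext i
      have h6 : d j * X j i = d j * x i := by
        have := hkey i
        rw [sub_eq_zero] at this
        rw [this]; ring
      exact mul_left_cancel₀ hdj h6
    · rintro ⟨j, rfl⟩
      exact hX j
  constructor
  · rw [hset]
    calc (Set.range X).ncard = Nat.card (Set.range X) := (Nat.card_coe_set_eq _).symm
      _ = Nat.card ↥(Idx n m) := Nat.card_range_of_injective hinj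
      _ = Fintype.card ↥(Idx n m) := Nat.card_eq_fintype_card
      _ = (Idx n m).card := Fintype.card_coe _
  · exact ⟨b, fun j => ⟨X j, C j, hC j, hX j, hbX j, heigX j⟩⟩
end

section
/- If the multiplication matrices A_1, ..., A_n pairwise commute, then for every α ∈ ℤ_+^n and β ∈ I, the β-row, applied in any order of the factors, of the product A_1^{α_1} ··· A_n^{α_n} is well-defined, and the map x^β ↦ (row of identity at β) extends to a K-algebra homomorphism from K[x]/ideal(P_α : α∈J) onto the commutative subalgebra of M_{#I}(K) generated by A_1, ..., A_n sending x_i to A_i. -/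
open Finset Matrix

section Aux

variable {K : Type*} [Field K] {n : ℕ} (I : Finset (Fin n → ℕ))
  (a : (Fin n → ℕ) → (Fin n → ℕ) → K)

/-- The monomial `x^β` as an `MvPolynomial`. -/
noncomputable def mymono (β : Fin n → ℕ) : MvPolynomial (Fin n) K :=
  MvPolynomial.monomial (Finsupp.equivFunOnFinite.symm β) 1

lemma symm_add (x y : Fin n → ℕ) :
    (Finsupp.equivFunOnFinite.symm (x + y) : (Fin n) →₀ ℕ) =
      Finsupp.equivFunOnFinite.symm x + Finsupp.equivFunOnFinite.symm y := by
  ext i; simp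

lemma mymono_add (x y : Fin n → ℕ) :
    (mymono (x + y) : MvPolynomial (Fin n) K) = mymono x * mymono y := by
  simp [mymono, symm_add, MvPolynomial.monomial_mul]

lemma symm_single (i : Fin n) :
    (Finsupp.equivFunOnFinite.symm (Pi.single i 1) : (Fin n) →₀ ℕ) = Finsupp.single i 1 := by
  ext j
  simp [Finsupp.single_apply, Pi.single_apply, eq_comm]

lemma mymono_single (i : Fin n) :
    (mymono (Pi.single i 1) : MvPolynomial (Fin n) K) = MvPolynomial.X i := by
  rw [mymono, symm_single, MvPolynomial.X]

variable (hcomm : ∀ i j, multMat I a i * multMat I a j = multMat I a j * multMat I a i)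

/-- The algebra hom `K[x] → M_{#I}(K)` sending `x_i` to `A_i`, via the commutative
subalgebra generated by the `A_i`. -/
noncomputable def phi0 : MvPolynomial (Fin n) K →ₐ[K] Matrix ↥I ↥I K :=
  letI : CommRing (Algebra.adjoin K (Set.range (multMat I a))) :=
    Algebra.adjoinCommRingOfComm K (by
      rintro x ⟨i, rfl⟩ y ⟨j, rfl⟩
      exact hcomm i j)
  (Algebra.adjoin K (Set.range (multMat I a))).val.comp
    (MvPolynomial.aeval fun i =>
      (⟨multMat I a i, Algebra.subset_adjoin ⟨i, rfl⟩⟩ :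
        Algebra.adjoin K (Set.range (multMat I a))))

lemma phi0_X (i : Fin n) : phi0 I a hcomm (MvPolynomial.X i) = multMat I a i := by
  simp [phi0]

lemma phi0_mem (p : MvPolynomial (Fin n) K) :
    phi0 I a hcomm p ∈ Algebra.adjoin K (Set.range (multMat I a)) := by
  letI : CommRing (Algebra.adjoin K (Set.range (multMat I a))) :=
    Algebra.adjoinCommRingOfComm K (by
      rintro x ⟨i, rfl⟩ y ⟨j, rfl⟩
      exact hcomm i j)
  exact (MvPolynomial.aeval (R := K) (fun i =>
      (⟨multMat I a i, Algebra.subset_adjoin ⟨i, rfl⟩⟩ :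
        Algebra.adjoin K (Set.range (multMat I a)))) p).2

lemma phi0_comm (p q : MvPolynomial (Fin n) K) :
    phi0 I a hcomm p * phi0 I a hcomm q = phi0 I a hcomm q * phi0 I a hcomm p := by
  rw [← _root_.map_mul, ← _root_.map_mul, mul_comm]

/-- If row `β` of `M` is the standard basis vector at `δ`, then row `β` of `M * N` is
row `δ` of `N`. -/
lemma row_pick (M N : Matrix ↥I ↥I K) (β δ : ↥I)
    (h : ∀ γ, M β γ = if γ = δ then 1 else 0) (γ : ↥I) :
    (M * N) β γ = N δ γ := by
  rw [Matrix.mul_apply]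
  simp [h, ite_mul]

lemma row0_mymono (h0 : (0 : Fin n → ℕ) ∈ I) (hI : IsLower I) :
    ∀ (m : ℕ) (β : Fin n → ℕ) (hβ : β ∈ I), mdeg β ≤ m → ∀ γ : ↥I,
      phi0 I a hcomm (mymono β) ⟨0, h0⟩ γ = (if γ = ⟨β, hβ⟩ then (1 : K) else 0) := by
  intro m
  induction m with
  | zero =>
    intro β hβ hm γ
    have hβ0 : β = 0 := by
      funext i
      have h1 : ∑ j, β j = 0 := Nat.le_zero.mp hm
      have := Finset.sum_eq_zero_iff.mp h1 i (Finset.mem_univ i)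
      simpa using this
    subst hβ0
    have hz : (Finsupp.equivFunOnFinite.symm (0 : Fin n → ℕ) : (Fin n) →₀ ℕ) = 0 := by
      ext j; simp
    have : (mymono (0 : Fin n → ℕ) : MvPolynomial (Fin n) K) = 1 := by
      rw [mymono, hz, MvPolynomial.monomial_zero', MvPolynomial.C_1]
    rw [this, _root_.map_one]
    rw [Matrix.one_apply]
    simp [eq_comm]
  | succ m ih =>
    intro β hβ hm γ
    by_cases h : mdeg β ≤ m
    · exact ih β hβ h γ
    have hne : ∃ i, β i ≠ 0 := by
      by_contra hc
      push_neg at hc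
      apply h
      have : mdeg β = 0 := Finset.sum_eq_zero fun i _ => hc i
      omega
    obtain ⟨i, hi⟩ := hne
    set β' : Fin n → ℕ := Function.update β i (β i - 1) with hβ'def
    have hβ'le : ∀ j, β' j ≤ β j := by
      intro j
      by_cases hj : j = i
      · subst hj; simp [hβ'def]
      · simp [hβ'def, Function.update_of_ne hj]
    have hβ' : β' ∈ I := hI β hβ β' hβ'le
    have hsum : β = β' + Pi.single i 1 := by
      funext j
      by_cases hj : j = i
      · subst hj
        simp [hβ'def]
        omega
      · simp [hβ'def, Function.update_of_ne hj, Pi.single_apply, hj]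
    have hdeg : mdeg β' ≤ m := by
      have hlt : mdeg β' < mdeg β := by
        apply Finset.sum_lt_sum (fun j _ => hβ'le j)
        exact ⟨i, Finset.mem_univ i, by simp [hβ'def]; omega⟩
      omega
    conv_lhs => rw [hsum, mymono_add, _root_.map_mul, mymono_single, phi0_X]
    rw [row_pick I (phi0 I a hcomm (mymono β')) _ ⟨0, h0⟩ ⟨β', hβ'⟩
      (ih β' hβ' hdeg)]
    simp only [multMat]
    have hmem : β' + Pi.single i 1 ∈ I := by rw [← hsum]; exact hβ
    rw [if_pos hmem]
    by_cases hc : (γ : Fin n → ℕ) = β' + Pi.single i 1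
    · rw [if_pos hc, if_pos (by apply Subtype.ext; rw [hc, ← hsum])]
    · rw [if_neg hc, if_neg (by
        intro h
        apply hc
        rw [Subtype.ext_iff] at h
        rw [h]
        exact hsum)]

lemma row0_border (h0 : (0 : Fin n → ℕ) ∈ I) (hI : IsLower I)
    (α : Fin n → ℕ) (hα : InBorder I α) (γ : ↥I) :
    phi0 I a hcomm (mymono α) ⟨0, h0⟩ γ = a α γ := by
  obtain ⟨hnot, β, hβ, i, rfl⟩ := hα
  rw [mymono_add, _root_.map_mul, mymono_single, phi0_X]
  rw [row_pick I (phi0 I a hcomm (mymono β)) _ ⟨0, h0⟩ ⟨β, hβ⟩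
    (row0_mymono I a hcomm h0 hI (mdeg β) β hβ le_rfl)]
  simp only [multMat]
  rw [if_neg hnot]

lemma row0_Pb (h0 : (0 : Fin n → ℕ) ∈ I) (hI : IsLower I)
    (α : Fin n → ℕ) (hα : InBorder I α) (γ : ↥I) :
    phi0 I a hcomm (Pb I a α) ⟨0, h0⟩ γ = 0 := by
  have hPb : Pb I a α = mymono α - ∑ β ∈ I, a α β • mymono β := by
    rw [Pb]
    congr 1
    refine Finset.sum_congr rfl fun β _ => ?_
    rw [MvPolynomial.smul_eq_C_mul]
    rfl
  rw [hPb, _root_.map_sub, _root_.map_sum, Matrix.sub_apply, Matrix.sum_apply]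
  rw [row0_border I a hcomm h0 hI α hα γ]
  have hterm : ∀ β ∈ I,
      (phi0 I a hcomm (a α β • mymono β)) ⟨0, h0⟩ γ
        = a α β • (phi0 I a hcomm (mymono β)) ⟨0, h0⟩ γ := by
    intro β hβ
    rw [_root_.map_smul, Matrix.smul_apply]
  rw [Finset.sum_congr rfl hterm]
  rw [← Finset.sum_attach I
    (fun β => a α β • (phi0 I a hcomm (mymono β)) ⟨0, h0⟩ γ)]
  have : ∀ β : ↥I,
      a α β • (phi0 I a hcomm (mymono (β : Fin n → ℕ))) ⟨0, h0⟩ γ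
        = a α β • (if γ = β then (1 : K) else 0) := by
    intro β
    rw [row0_mymono I a hcomm h0 hI (mdeg (β : Fin n → ℕ)) β β.2 le_rfl γ]
  rw [Finset.sum_congr rfl fun β _ => this β]
  rw [← Finset.univ_eq_attach]
  simp [smul_ite]

lemma phi0_Pb (h0 : (0 : Fin n → ℕ) ∈ I) (hI : IsLower I)
    (α : Fin n → ℕ) (hα : InBorder I α) :
    phi0 I a hcomm (Pb I a α) = 0 := by
  ext β γ
  have h1 : phi0 I a hcomm (mymono (β : Fin n → ℕ)) * phi0 I a hcomm (Pb I a α)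
      = phi0 I a hcomm (Pb I a α) * phi0 I a hcomm (mymono (β : Fin n → ℕ)) :=
    phi0_comm I a hcomm _ _
  have h2 := row_pick I (phi0 I a hcomm (mymono (β : Fin n → ℕ)))
    (phi0 I a hcomm (Pb I a α)) ⟨0, h0⟩ β
    (by
      intro γ'
      rw [row0_mymono I a hcomm h0 hI (mdeg (β : Fin n → ℕ)) β β.2 le_rfl γ']) γ
  rw [h1, Matrix.mul_apply] at h2
  rw [Matrix.zero_apply, ← h2]
  apply Finset.sum_eq_zero
  intro δ _
  rw [row0_Pb I a hcomm h0 hI α hα δ, zero_mul]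

end Aux

/-- If the multiplication matrices pairwise commute, the assignment `x_i ↦ A_i` induces a
well-defined `K`-algebra homomorphism from `K[x]/(P_α : α ∈ J)` onto the commutative
subalgebra generated by `A_1, …, A_n`, under which the class of `x^β` (for `β ∈ I`) has
the row of the identity at `β` as its row indexed by `0`. -/
theorem stmt_16 {K : Type*} [Field K] {n : ℕ} (I : Finset (Fin n → ℕ)) (hI : IsLower I)
    (h0 : (0 : Fin n → ℕ) ∈ I) (a : (Fin n → ℕ) → (Fin n → ℕ) → K)
    (hcomm : ∀ i j, multMat I a i * multMat I a j = multMat I a j * multMat I a i) :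
    ∃ φ : (MvPolynomial (Fin n) K ⧸ PIdeal I a) →ₐ[K] Matrix ↥I ↥I K,
      (∀ i, φ (Ideal.Quotient.mk _ (MvPolynomial.X i)) = multMat I a i) ∧
      (∀ β : ↥I, φ (Ideal.Quotient.mk _
          (MvPolynomial.monomial (Finsupp.equivFunOnFinite.symm (β : Fin n → ℕ)) 1))
          ⟨0, h0⟩ = fun γ => if γ = β then 1 else 0) ∧
      φ.range = Algebra.adjoin K (Set.range fun i => multMat I a i) := by
  have hker : ∀ p ∈ PIdeal I a, phi0 I a hcomm p = 0 := by
    intro p hp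
    have hle : PIdeal I a ≤ RingHom.ker (phi0 I a hcomm).toRingHom := by
      rw [PIdeal, Ideal.span_le]
      rintro q ⟨α, hα, rfl⟩
      exact phi0_Pb I a hcomm h0 hI α hα
    exact hle hp
  have hlift : ∀ p, Ideal.Quotient.liftₐ (PIdeal I a) (phi0 I a hcomm) hker
      (Ideal.Quotient.mk _ p) = phi0 I a hcomm p := fun p => rfl
  refine ⟨Ideal.Quotient.liftₐ (PIdeal I a) (phi0 I a hcomm) hker, ?_, ?_, ?_⟩
  · intro i
    rw [hlift, phi0_X]
  · intro β
    funext γ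
    rw [hlift]
    exact row0_mymono I a hcomm h0 hI (mdeg (β : Fin n → ℕ)) β β.2 le_rfl γ
  · have hr : (phi0 I a hcomm).range
        = Algebra.adjoin K (Set.range fun i => multMat I a i) := by
      apply le_antisymm
      · rintro x ⟨p, rfl⟩
        exact phi0_mem I a hcomm p
      · rw [Algebra.adjoin_le_iff]
        rintro x ⟨i, rfl⟩
        exact ⟨MvPolynomial.X i, phi0_X I a hcomm i⟩
    rw [← hr]
    ext x
    constructor
    · rintro ⟨q, rfl⟩
      obtain ⟨p, rfl⟩ := Ideal.Quotient.mk_surjective q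
      exact ⟨p, (hlift p).symm ▸ rfl⟩
    · rintro ⟨p, rfl⟩
      exact ⟨Ideal.Quotient.mk _ p, hlift p⟩
end
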